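/- arXiv:2509.21826 — 2 statements merged into one kernel-verified Lean document; each statement's English description precedes it below -/
import Mathlib

section
/- Let p be a probability mass function on the finite set {1,...,V}, let H(p) = −Σ_{v=1}^V p_v log p_v be its Shannon entropy (with 0 · log 0 = 0), and let y be sampled from p. Then E_{y∼p}[‖e_y − p‖²] ≤ 1 − e^{−H(p)}, where e_y is the one-hot vector of y. -/
/-!
Expanding the square, `∑_y p_y ‖e_y − p‖² = 1 − ∑_v p_v²`, one minus the collision probability.
Jensen's inequality for `exp` with weights `p_v` at the points `log p_v` gives
`e^{−H(p)} = exp (∑_v p_v log p_v) ≤ ∑_v p_v · p_v`.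
-/

open Finset Real

theorem EuclideanSpace.norm_sq_eq_sum_sq {ι : Type*} [Fintype ι] (x : EuclideanSpace ℝ ι) :
    ‖x‖ ^ 2 = ∑ i, x i ^ 2 := by
  simp [EuclideanSpace.norm_sq_eq]

theorem EuclideanSpace.norm_single_one_sub_sq {ι : Type*} [Fintype ι] [DecidableEq ι] (i : ι)
    (x : EuclideanSpace ℝ ι) :
    ‖EuclideanSpace.single i (1 : ℝ) - x‖ ^ 2 = 1 - 2 * x i + ‖x‖ ^ 2 := by
  rw [norm_sub_sq_real, EuclideanSpace.inner_single_left]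
  simp

theorem EuclideanSpace.sum_mul_norm_single_one_sub_sq {ι : Type*} [Fintype ι] [DecidableEq ι]
    (p : EuclideanSpace ℝ ι) (hsum : ∑ v, p v = 1) :
    ∑ y, p y * ‖EuclideanSpace.single y (1 : ℝ) - p‖ ^ 2 = 1 - ∑ v, p v ^ 2 := by
  simp_rw [norm_single_one_sub_sq, norm_sq_eq_sum_sq]
  calc ∑ y, p y * (1 - 2 * p y + ∑ v, p v ^ 2)
      = (∑ y, p y) * (1 + ∑ v, p v ^ 2) - 2 * ∑ y, p y ^ 2 := by
        rw [sum_mul, mul_sum, ← sum_sub_distrib]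
        exact sum_congr rfl fun y _ => by ring
    _ = 1 - ∑ v, p v ^ 2 := by rw [hsum]; ring

theorem Real.exp_sum_mul_log_le_sum_sq {ι : Type*} {s : Finset ι} {w : ι → ℝ}
    (hw : ∀ i ∈ s, 0 ≤ w i) (hsum : ∑ i ∈ s, w i = 1) :
    exp (∑ i ∈ s, w i * log (w i)) ≤ ∑ i ∈ s, w i ^ 2 := by
  calc exp (∑ i ∈ s, w i • log (w i))
      ≤ ∑ i ∈ s, w i • exp (log (w i)) :=
        convexOn_exp.map_sum_le hw hsum fun _ _ => Set.mem_univ _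
    _ = ∑ i ∈ s, w i ^ 2 := by
        refine sum_congr rfl fun i hi => ?_
        rcases (hw i hi).eq_or_lt with h0 | hpos
        · simp [← h0]
        · rw [smul_eq_mul, exp_log hpos, sq]

/-- **Per-step score–entropy bound (Lemma 2, Second-Order Moment and Entropy Connection).**
For a probability mass function `p` on `{1,…,V}` with Shannon entropy
`H(p) = −∑_v p_v log p_v` (convention `0 · log 0 = 0`, automatic since `Real.log 0 = 0`),
and `y ∼ p`, one has `E_{y∼p}[‖e_y − p‖²] ≤ 1 − e^{−H(p)}`. -/
theorem expected_score_norm_sq_le_entropy_bound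
    {V : ℕ} (p : EuclideanSpace ℝ (Fin V))
    (hnn : ∀ v, 0 ≤ p v) (hsum : ∑ v, p v = 1) :
    ∑ y, p y * ‖EuclideanSpace.single y (1 : ℝ) - p‖ ^ 2
      ≤ 1 - Real.exp (-(-(∑ v, p v * Real.log (p v)))) := by
  rw [EuclideanSpace.sum_mul_norm_single_one_sub_sq p hsum, neg_neg]
  linarith [exp_sum_mul_log_le_sum_sq (s := univ) (fun v _ => hnn v) hsum]
end

section
/- Let p be a probability mass function on the finite set {1,...,V} with Shannon entropy H(p) = −Σ_{v=1}^V p_v log p_v (convention 0 · log 0 = 0), let J be a real V × d matrix, and let y be sampled from p. Then E_{y∼p}[‖Jᵀ(e_y − p)‖²] ≤ ‖J‖_F² · (1 − e^{−H(p)}), where e_y is the one-hot vector of y and ‖J‖_F is the Frobenius norm of J. -/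
open scoped BigOperators
open Matrix

lemma sum_offDiag_swap {V : ℕ} (g : Fin V × Fin V → ℝ) :
    ∑ x ∈ Finset.univ.offDiag, g x = ∑ x ∈ (Finset.univ : Finset (Fin V)).offDiag, g x.swap := by
  refine Finset.sum_equiv (Equiv.prodComm (Fin V) (Fin V)) ?_ ?_
  · intro x
    simp [Finset.mem_offDiag, eq_comm]
  · intro x _
    rfl

lemma var_le {V : ℕ} (p f : Fin V → ℝ) (hnn : ∀ v, 0 ≤ p v) (hsum : ∑ v, p v = 1) :
    ∑ y, p y * (f y - ∑ v, p v * f v) ^ 2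
      ≤ (∑ v, f v ^ 2) * (1 - ∑ v, (p v) ^ 2) := by
  classical
  set μ : ℝ := ∑ v, p v * f v with hμ
  set A : ℝ := ∑ v, f v ^ 2 with hA
  -- expand the variance
  have h1 : ∑ y, p y * (f y - μ) ^ 2 = (∑ y, p y * (f y) ^ 2) - μ ^ 2 := by
    have : ∀ y, p y * (f y - μ) ^ 2
        = p y * (f y) ^ 2 - 2 * μ * (p y * f y) + μ ^ 2 * p y := fun y => by ring
    rw [Finset.sum_congr rfl fun y _ => this y, Finset.sum_add_distrib,
      Finset.sum_sub_distrib, ← Finset.mul_sum, ← Finset.mul_sum, hsum, ← hμ]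
    ring
  set g : Fin V × Fin V → ℝ :=
    fun x => p x.1 * p x.2 * (A + f x.1 * f x.2 - f x.1 ^ 2) with hg
  -- the key identity: the gap equals an off-diagonal sum
  have hprod : ∀ (u v : Fin V → ℝ),
      (∑ y, u y) * (∑ y, v y) = ∑ x ∈ Finset.univ ×ˢ (Finset.univ : Finset (Fin V)),
        u x.1 * v x.2 := by
    intro u v
    rw [Finset.sum_mul_sum, Finset.sum_product]
  have hsplit : ∀ (h : Fin V × Fin V → ℝ),
      ∑ x ∈ Finset.univ ×ˢ (Finset.univ : Finset (Fin V)), h x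
        = (∑ y, h (y, y)) + ∑ x ∈ (Finset.univ : Finset (Fin V)).offDiag, h x := by
    intro h
    rw [← Finset.diag_union_offDiag, Finset.sum_union (Finset.disjoint_diag_offDiag _),
      Finset.sum_diag]
  have hdiag_eq : ∑ y : Fin V, (p y * f y) * (p y * f y)
      = ∑ y : Fin V, p y * p y * f y ^ 2 :=
    Finset.sum_congr rfl fun y _ => by ring
  have hP : (1:ℝ) = (∑ y : Fin V, p y * p y)
      + ∑ x ∈ (Finset.univ : Finset (Fin V)).offDiag, p x.1 * p x.2 := by
    rw [← hsplit (fun x => p x.1 * p x.2), ← hprod p p, hsum, one_mul]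
  have hsq : ∑ v, (p v) ^ 2 = ∑ y : Fin V, p y * p y :=
    Finset.sum_congr rfl fun y _ => sq (p y)
  have h1mp : 1 - ∑ v, (p v) ^ 2
      = ∑ x ∈ (Finset.univ : Finset (Fin V)).offDiag, p x.1 * p x.2 := by
    rw [hsq]; linarith
  have hE : ∑ y, p y * (f y) ^ 2
      = (∑ y : Fin V, p y * p y * f y ^ 2)
        + ∑ x ∈ (Finset.univ : Finset (Fin V)).offDiag, p x.1 * p x.2 * f x.1 ^ 2 := by
    have h := hprod (fun y => p y * f y ^ 2) p
    rw [hsum, mul_one] at h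
    rw [h, hsplit]
    congr 1
    · exact Finset.sum_congr rfl fun y _ => by ring
    · exact Finset.sum_congr rfl fun x _ => by ring
  have hF : μ ^ 2
      = (∑ y : Fin V, p y * p y * f y ^ 2)
        + ∑ x ∈ (Finset.univ : Finset (Fin V)).offDiag,
            (p x.1 * f x.1) * (p x.2 * f x.2) := by
    have h := hprod (fun y => p y * f y) (fun y => p y * f y)
    rw [hμ, sq, h, hsplit, hdiag_eq]
  have hid : A * (1 - ∑ v, (p v) ^ 2) - ((∑ y, p y * (f y) ^ 2) - μ ^ 2)
      = ∑ x ∈ (Finset.univ : Finset (Fin V)).offDiag, g x := by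
    rw [h1mp, hE, hF, Finset.mul_sum]
    have hcomb : ∑ x ∈ (Finset.univ : Finset (Fin V)).offDiag,
          (A * (p x.1 * p x.2)
            - p x.1 * p x.2 * f x.1 ^ 2 + (p x.1 * f x.1) * (p x.2 * f x.2))
        = ∑ x ∈ (Finset.univ : Finset (Fin V)).offDiag, g x :=
      Finset.sum_congr rfl fun x _ => by simp only [hg]; ring
    have hsplit2 : ∑ x ∈ (Finset.univ : Finset (Fin V)).offDiag,
          (A * (p x.1 * p x.2)
            - p x.1 * p x.2 * f x.1 ^ 2 + (p x.1 * f x.1) * (p x.2 * f x.2))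
        = ∑ x ∈ (Finset.univ : Finset (Fin V)).offDiag, A * (p x.1 * p x.2)
          - ∑ x ∈ (Finset.univ : Finset (Fin V)).offDiag, p x.1 * p x.2 * f x.1 ^ 2
          + ∑ x ∈ (Finset.univ : Finset (Fin V)).offDiag,
              (p x.1 * f x.1) * (p x.2 * f x.2) := by
      rw [← Finset.sum_sub_distrib, ← Finset.sum_add_distrib]
    linarith [hcomb, hsplit2]
  -- the off-diagonal sum is nonnegative
  have hnonneg : 0 ≤ ∑ x ∈ (Finset.univ : Finset (Fin V)).offDiag, g x := by
    have hswap := sum_offDiag_swap g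
    have h2 : 2 * ∑ x ∈ (Finset.univ : Finset (Fin V)).offDiag, g x
        = ∑ x ∈ (Finset.univ : Finset (Fin V)).offDiag, (g x + g x.swap) := by
      rw [Finset.sum_add_distrib, ← hswap]; ring
    have hterm : ∀ x ∈ (Finset.univ : Finset (Fin V)).offDiag, 0 ≤ g x + g x.swap := by
      intro x hx
      have hne : x.1 ≠ x.2 := (Finset.mem_offDiag.mp hx).2.2
      have hAx : f x.1 ^ 2 + f x.2 ^ 2 ≤ A := by
        have hsub : ({x.1, x.2} : Finset (Fin V)) ⊆ Finset.univ := Finset.subset_univ _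
        have := Finset.sum_le_sum_of_subset_of_nonneg hsub
          (fun i _ _ => sq_nonneg (f i))
        rwa [Finset.sum_pair hne] at this
      have hpp : 0 ≤ p x.1 * p x.2 := mul_nonneg (hnn x.1) (hnn x.2)
      have : g x + g x.swap
          = p x.1 * p x.2 * (2 * A + 2 * (f x.1 * f x.2) - f x.1 ^ 2 - f x.2 ^ 2) := by
        simp only [hg, Prod.fst_swap, Prod.snd_swap]; ring
      rw [this]
      nlinarith [sq_nonneg (f x.1 + f x.2)]
    nlinarith [Finset.sum_nonneg hterm, h2]
  linarith [h1, hid, hnonneg]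

lemma exp_neg_entropy_le {V : ℕ} (p : Fin V → ℝ) (hnn : ∀ v, 0 ≤ p v)
    (hsum : ∑ v, p v = 1) :
    Real.exp (∑ v, p v * Real.log (p v)) ≤ ∑ v, (p v) ^ 2 := by
  have hJ := convexOn_exp.map_sum_le (t := Finset.univ)
    (w := p) (p := fun v => Real.log (p v)) (fun i _ => hnn i) hsum
    (fun i _ => Set.mem_univ _)
  simp only [smul_eq_mul] at hJ
  refine hJ.trans ?_
  apply Finset.sum_le_sum
  intro i _
  rcases eq_or_lt_of_le (hnn i) with h | h
  · simp [← h]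
  · rw [Real.exp_log h]; nlinarith

/-- **Per-step variance contribution bound (Lemma 2 / Theorem 1, the quantity β_t).**
For a probability mass function `p` on `{1,…,V}` with Shannon entropy
`H(p) = −∑_v p_v log p_v` (convention `0·log 0 = 0`, automatic since `Real.log 0 = 0`),
a matrix `J ∈ ℝ^{V×d}`, and `y ∼ p`,
`E_{y∼p}[‖Jᵀ(e_y − p)‖²] ≤ ‖J‖_F² · (1 − e^{−H(p)})`,
where the squared Euclidean norm is written as a sum of squared coordinates and
`‖J‖_F² = ∑_{v,k} J_{vk}²`. -/
theorem jacobian_score_entropy_bound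
    {V d : ℕ} (p : Fin V → ℝ) (J : Matrix (Fin V) (Fin d) ℝ)
    (hnn : ∀ v, 0 ≤ p v) (hsum : ∑ v, p v = 1) :
    ∑ y, p y *
        (∑ k, (Jᵀ.mulVec (fun v => (if v = y then (1 : ℝ) else 0) - p v) k) ^ 2)
      ≤ (∑ v, ∑ k, (J v k) ^ 2)
          * (1 - Real.exp (-(-(∑ v, p v * Real.log (p v))))) := by
  classical
  have hmv : ∀ (y : Fin V) (k : Fin d),
      Jᵀ.mulVec (fun v => (if v = y then (1 : ℝ) else 0) - p v) k
        = J y k - ∑ v, p v * J v k := by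
    intro y k
    simp only [Matrix.mulVec, dotProduct, Matrix.transpose_apply, mul_sub,
      mul_ite, mul_one, mul_zero]
    rw [Finset.sum_sub_distrib, Finset.sum_ite_eq' Finset.univ y (fun v => J v k)]
    simp [mul_comm]
  have hstep : ∑ y, p y *
      (∑ k, (Jᵀ.mulVec (fun v => (if v = y then (1 : ℝ) else 0) - p v) k) ^ 2)
      = ∑ k, ∑ y, p y * ((J y k - ∑ v, p v * J v k) ^ 2) := by
    simp only [hmv, Finset.mul_sum]
    exact Finset.sum_comm
  rw [hstep, neg_neg]
  have hk : ∀ k : Fin d, ∑ y, p y * ((J y k - ∑ v, p v * J v k) ^ 2)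
      ≤ (∑ v, (J v k) ^ 2) * (1 - ∑ v, (p v) ^ 2) := fun k =>
    var_le p (fun y => J y k) hnn hsum
  have hS : (0:ℝ) ≤ ∑ v, ∑ k, (J v k) ^ 2 :=
    Finset.sum_nonneg fun v _ => Finset.sum_nonneg fun k _ => sq_nonneg _
  calc ∑ k, ∑ y, p y * ((J y k - ∑ v, p v * J v k) ^ 2)
      ≤ ∑ k, (∑ v, (J v k) ^ 2) * (1 - ∑ v, (p v) ^ 2) :=
        Finset.sum_le_sum fun k _ => hk k
    _ = (∑ v, ∑ k, (J v k) ^ 2) * (1 - ∑ v, (p v) ^ 2) := by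
        rw [← Finset.sum_mul, Finset.sum_comm]
    _ ≤ (∑ v, ∑ k, (J v k) ^ 2) * (1 - Real.exp (∑ v, p v * Real.log (p v))) := by
        apply mul_le_mul_of_nonneg_left _ hS
        have := exp_neg_entropy_le p hnn hsum
        linarith
end
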